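/- Let Γ be a countably infinite group with a finite symmetric generating set S and Cayley graph 𝒢. Let ε > 0, δ ∈ (0, 1/√2), and let K ⊆ Γ be a finite set containing a non-identity element, such that every normalized positive definite function φ : Γ → [0,1] with min_{g ∈ K} φ(g) ≥ 1 − δ²ε²/2 satisfies inf_{g ∈ Γ} φ(g) ≥ 1 − 2δ². Set d_K := max_{g ∈ K} |g|. Then for every Γ-invariant bond percolation P on 𝒢 with E[deg_ω(o)] > deg(o) − δ²ε²/(2·d_K), one has inf_{g,h ∈ Γ} τ(g,h) ≥ 1 − 2δ² > 0. -/

import Mathlib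

open MeasureTheory Filter
open scoped ComplexOrder symmDiff

namespace InvPerc

variable {Γ : Type*} [Group Γ]

/-- Percolation configurations: indicator functions on unordered pairs of vertices. -/
abbrev Config (Γ : Type*) := Sym2 Γ → Bool

/-- The edge set of the (right) Cayley graph of `Γ` with respect to `S`. -/
def IsCayleyEdge (S : Finset Γ) (e : Sym2 Γ) : Prop :=
  ∃ g : Γ, ∃ t ∈ S, e = s(g, g * t)

/-- The action of `Γ` on configurations induced by left multiplication:
`e ∈ shift γ ω ↔ γ⁻¹ • e ∈ ω`. -/
def shift (γ : Γ) (ω : Config Γ) : Config Γ :=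
  fun e => ω (Sym2.map (fun x => γ⁻¹ * x) e)

/-- `ConnBy ω u v n` : `u` and `v` are joined by a path of at most `n` open edges of `ω`. -/
def ConnBy (ω : Config Γ) (u v : Γ) (n : ℕ) : Prop :=
  ∃ l : List Γ, l.length ≤ n ∧ List.Chain (fun a b => ω s(a, b) = true) u l ∧
    (u :: l).getLast (List.cons_ne_nil u l) = v

/-- `u` and `v` lie in the same cluster of the configuration `ω` (`u ↔ v` in `ω`). -/
def Conn (ω : Config Γ) (u v : Γ) : Prop := ∃ n : ℕ, ConnBy ω u v n

/-- The two-point function `τ(u,v) = P[u ↔ v]`. -/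
noncomputable def tpf (P : Measure (Config Γ)) (u v : Γ) : ℝ :=
  (P {ω | Conn ω u v}).toReal

/-- A `Γ`-invariant bond percolation on the Cayley graph of `(Γ, S)`: a probability
measure on configurations, supported on subsets of the Cayley edge set, invariant under
the action induced by left multiplication. -/
structure IsInvBondPerc (S : Finset Γ) (P : Measure (Config Γ)) : Prop where
  prob : IsProbabilityMeasure P
  supported : P {ω | ∀ e : Sym2 Γ, ω e = true → IsCayleyEdge S e} = 1
  invariant : ∀ γ : Γ, P.map (shift γ) = P

/-- The expected degree of the origin, `E[deg_ω(o)] = ∑_{t ∈ S} P[{o, t} ∈ ω]`. -/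
noncomputable def expDeg (S : Finset Γ) (P : Measure (Config Γ)) : ℝ :=
  ∑ t ∈ S, (P {ω : Config Γ | ω s(1, t) = true}).toReal

/-- The word length of `g` with respect to the generating set `S`. -/
noncomputable def wlen (S : Finset Γ) (g : Γ) : ℕ :=
  sInf {n : ℕ | ∃ l : List Γ, (∀ x ∈ l, x ∈ S) ∧ l.prod = g ∧ l.length = n}

/-- The word metric `d(g,h) = |g⁻¹h|`. -/
noncomputable def wdist (S : Finset Γ) (g h : Γ) : ℕ := wlen S (g⁻¹ * h)

/-- The two-point function of `P` vanishes at infinity: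
`sup {τ(g,h) : d(g,h) > r} → 0` as `r → ∞`. -/
def TpfVanishes (S : Finset Γ) (P : Measure (Config Γ)) : Prop :=
  ∀ ε : ℝ, 0 < ε → ∃ r : ℕ, ∀ g h : Γ, r < wdist S g h → tpf P g h < ε

/-- `S` is a finite symmetric generating set not containing the identity. -/
def IsSymmGen (S : Finset Γ) : Prop :=
  (1 : Γ) ∉ S ∧ (∀ t ∈ S, t⁻¹ ∈ S) ∧
    ∀ g : Γ, ∃ l : List Γ, (∀ x ∈ l, x ∈ S) ∧ l.prod = g

/-- A positive definite function on `Γ`. -/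
def IsPosDef (φ : Γ → ℂ) : Prop :=
  ∀ (n : ℕ) (g : Fin n → Γ) (a : Fin n → ℂ),
    0 ≤ ∑ i : Fin n, ∑ j : Fin n, (starRingEnd ℂ) (a i) * a j * φ ((g i)⁻¹ * g j)

/-- A conditionally negative definite function on `Γ`. -/
def IsCondNegDef (ψ : Γ → ℝ) : Prop :=
  ψ 1 = 0 ∧ (∀ g : Γ, ψ g⁻¹ = ψ g) ∧
    ∀ (n : ℕ) (g : Fin n → Γ) (a : Fin n → ℝ), (∑ i : Fin n, a i) = 0 →
      ∑ i : Fin n, ∑ j : Fin n, a i * a j * ψ ((g i)⁻¹ * g j) ≤ 0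

end InvPerc

namespace InvPerc

/-!
The function `φ g = τ(o, g)` is normalized and positive definite: by invariance
`τ(g, h) = φ(g⁻¹ h)`, and for a fixed configuration the kernel `1[gᵢ ↔ gⱼ]` is the Gram kernel
of the indicator vectors of the clusters, so its average over `P` is positive semidefinite.
An edge `{g, g t}` is closed with probability `P[{o, t} ∉ ω] ≤ deg(o) - E[deg_ω(o)]`, so a union
bound along a geodesic word gives `τ(o, g) ≥ 1 - |g| (deg(o) - E[deg_ω(o)]) ≥ 1 - δ²ε²/2` for
`g ∈ K`, and the hypothesis on positive definite functions yields `φ ≥ 1 - 2δ²` everywhere.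
-/

theorem sum_sum_ite_eq_conj_mul_nonneg {ι α : Type*} [Fintype ι] [DecidableEq α] (r : ι → α)
    (a : ι → ℂ) : 0 ≤ ∑ i, ∑ j, if r i = r j then starRingEnd ℂ (a i) * a j else 0 := by
  set A : α → ℂ := fun c => ∑ j with r j = c, a j
  have hfiber : ∀ i, ∑ j, (if r i = r j then starRingEnd ℂ (a i) * a j else 0) =
      starRingEnd ℂ (a i) * A (r i) := fun i => by
    simp only [A, Finset.sum_filter, Finset.mul_sum, mul_ite, mul_zero, eq_comm]
  calc (0 : ℂ) ≤ ∑ c ∈ Finset.univ.image r, starRingEnd ℂ (A c) * A c :=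
        Finset.sum_nonneg fun c _ => star_mul_self_nonneg (A c)
    _ = ∑ c ∈ Finset.univ.image r, ∑ i with r i = c, starRingEnd ℂ (a i) * A (r i) := by
        refine Finset.sum_congr rfl fun c _ => ?_
        rw [map_sum, Finset.sum_mul]
        exact Finset.sum_congr rfl fun i hi => by rw [(Finset.mem_filter.1 hi).2]
    _ = ∑ i, ∑ j, if r i = r j then starRingEnd ℂ (a i) * a j else 0 := by
        rw [Finset.sum_fiberwise_of_maps_to fun i _ => Finset.mem_image_of_mem r
          (Finset.mem_univ i)]
        simp only [hfiber]

theorem sum_sum_mul_measureReal_nonneg {X ι : Type*} [MeasurableSpace X] (μ : Measure X)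
    [IsFiniteMeasure μ] [Fintype ι] {s : ι → ι → Set X} (hs : ∀ i j, MeasurableSet (s i j))
    (c : ι → ι → ℂ) (h : ∀ x, 0 ≤ ∑ i, ∑ j, (s i j).indicator (fun _ => c i j) x) :
    0 ≤ ∑ i, ∑ j, c i j * μ.real (s i j) := by
  have hint : ∀ i j, Integrable ((s i j).indicator fun _ => c i j) μ :=
    fun i j => (integrable_const _).indicator (hs i j)
  have hexp : ∑ i, ∑ j, c i j * μ.real (s i j) =
      ∫ x, ∑ i, ∑ j, (s i j).indicator (fun _ => c i j) x ∂μ := by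
    rw [integral_finsetSum _ fun i _ => integrable_finsetSum _ fun j _ => hint i j]
    refine Finset.sum_congr rfl fun i _ => ?_
    rw [integral_finsetSum _ fun j _ => hint i j]
    refine Finset.sum_congr rfl fun j _ => ?_
    rw [integral_indicator_const _ (hs i j), Complex.real_smul, mul_comm]
  exact hexp ▸ integral_nonneg h

section Percolation

variable {Γ : Type*}

section Connectivity

variable {ω : Config Γ} {u v w : Γ}

theorem conn_iff_reflTransGen :
    Conn ω u v ↔ Relation.ReflTransGen (fun a b => ω s(a, b) = true) u v := by
  constructor
  · rintro ⟨-, l, -, hchain, hlast⟩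
    induction l generalizing u with
    | nil => exact hlast ▸ .refl
    | cons b l ih =>
      rw [List.Chain, List.isChain_cons_cons] at hchain
      rw [List.getLast_cons (List.cons_ne_nil b l)] at hlast
      exact .head hchain.1 (ih hchain.2 hlast)
  · intro h
    induction h using Relation.ReflTransGen.head_induction_on with
    | refl => exact ⟨0, [], le_rfl, List.IsChain.singleton _, rfl⟩
    | head hab _ ih =>
      obtain ⟨n, l, hlen, hchain, hlast⟩ := ih
      exact ⟨n + 1, _ :: l, Nat.succ_le_succ hlen, List.IsChain.cons_cons hab hchain,
        by rwa [List.getLast_cons (List.cons_ne_nil _ l)]⟩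

theorem conn_refl (ω : Config Γ) (u : Γ) : Conn ω u u :=
  conn_iff_reflTransGen.2 .refl

theorem Conn.symm (h : Conn ω u v) : Conn ω v u := by
  rw [conn_iff_reflTransGen] at h ⊢
  exact Relation.ReflTransGen.mono (fun a b (hab : ω s(b, a) = true) => by rwa [Sym2.eq_swap])
    v u (Relation.ReflTransGen.swap v u h)

theorem Conn.trans (h₁ : Conn ω u v) (h₂ : Conn ω v w) : Conn ω u w :=
  conn_iff_reflTransGen.2 ((conn_iff_reflTransGen.1 h₁).trans (conn_iff_reflTransGen.1 h₂))

theorem conn_of_open (h : ω s(u, v) = true) : Conn ω u v :=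
  conn_iff_reflTransGen.2 (.single h)

theorem setOf_conn_eq_iff : {x | Conn ω u x} = {x | Conn ω v x} ↔ Conn ω u v := by
  refine ⟨fun h => ?_, fun h => Set.ext fun x => ⟨h.symm.trans, h.trans⟩⟩
  have hv : v ∈ {x | Conn ω v x} := conn_refl ω v
  rwa [← h] at hv

end Connectivity

theorem measurableSet_edge_eq (e : Sym2 Γ) (b : Bool) : MeasurableSet {ω : Config Γ | ω e = b} :=
  (measurableSet_singleton b).preimage (measurable_pi_apply e)

theorem measurableSet_isChain_cons (u : Γ) (l : List Γ) :
    MeasurableSet {ω : Config Γ | List.IsChain (fun a b => ω s(a, b) = true) (u :: l)} := by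
  induction l generalizing u with
  | nil => simp
  | cons b l ih =>
    simp only [List.isChain_cons_cons, Set.ofPred_and]
    exact (measurableSet_edge_eq _ _).inter (ih b)

theorem measurableSet_conn [Countable Γ] (u v : Γ) :
    MeasurableSet {ω : Config Γ | Conn ω u v} := by
  simp only [Conn, ConnBy, Set.ofPred_exists, Set.ofPred_and]
  exact .iUnion fun _ => .iUnion fun l => (MeasurableSet.const _).inter
    ((measurableSet_isChain_cons u l).inter (MeasurableSet.const _))

theorem tpf_self (P : Measure (Config Γ)) [IsProbabilityMeasure P] (u : Γ) : tpf P u u = 1 := by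
  simp [tpf, conn_refl]

variable [Group Γ]

section Invariance

theorem conn_shift_iff {ω : Config Γ} {u v : Γ} (γ : Γ) :
    Conn (shift γ ω) u v ↔ Conn ω (γ⁻¹ * u) (γ⁻¹ * v) := by
  simp only [conn_iff_reflTransGen]
  constructor
  · exact Relation.ReflTransGen.lift (p := fun a b => ω s(a, b) = true) (γ⁻¹ * ·)
      (fun a b hab => hab) u v
  · intro h
    simpa [Function.onFun] using
      Relation.ReflTransGen.lift (p := fun a b => shift γ ω s(a, b) = true) (γ * ·)
        (fun a b hab => by simpa [Function.onFun, shift] using hab) _ _ h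

theorem measurable_shift (γ : Γ) : Measurable (shift γ : Config Γ → Config Γ) :=
  measurable_pi_lambda _ fun _ => measurable_pi_apply _

variable {P : Measure (Config Γ)}

theorem measureReal_shift_preimage (hinv : ∀ γ : Γ, P.map (shift γ) = P) (γ : Γ)
    {A : Set (Config Γ)} (hA : MeasurableSet A) :
    P.real (shift γ ⁻¹' A) = P.real A := by
  rw [measureReal_def, measureReal_def, ← Measure.map_apply (measurable_shift γ) hA, hinv]

theorem tpf_mul_left [Countable Γ] (hinv : ∀ γ : Γ, P.map (shift γ) = P) (γ u v : Γ) :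
    tpf P (γ * u) (γ * v) = tpf P u v := by
  have hpre : shift γ ⁻¹' {ω | Conn ω (γ * u) (γ * v)} = {ω | Conn ω u v} := by
    ext ω; simp [conn_shift_iff]
  rw [tpf, tpf, ← hpre]
  exact (measureReal_shift_preimage hinv γ (measurableSet_conn _ _)).symm

theorem measureReal_edge_eq_mul_left (hinv : ∀ γ : Γ, P.map (shift γ) = P) (γ t : Γ)
    (b : Bool) :
    P.real {ω | ω s(γ, γ * t) = b} = P.real {ω | ω s(1, t) = b} := by
  have hpre : shift γ ⁻¹' {ω | ω s(γ, γ * t) = b} = {ω | ω s(1, t) = b} := by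
    ext ω; simp [shift]
  rw [← hpre, measureReal_shift_preimage hinv _ (measurableSet_edge_eq _ _)]

end Invariance

theorem isPosDef_tpf [Countable Γ] {P : Measure (Config Γ)} [IsFiniteMeasure P]
    (hinv : ∀ γ : Γ, P.map (shift γ) = P) : IsPosDef fun g : Γ => (tpf P 1 g : ℂ) := by
  classical
  intro n g a
  have hτ : ∀ i j, tpf P 1 ((g i)⁻¹ * g j) = tpf P (g i) (g j) := fun i j => by
    simpa using (tpf_mul_left hinv (g i) 1 ((g i)⁻¹ * g j)).symm
  simp only [hτ]
  refine sum_sum_mul_measureReal_nonneg P (fun i j => measurableSet_conn (g i) (g j)) _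
    fun ω => ?_
  have hclusters := sum_sum_ite_eq_conj_mul_nonneg (fun i => {x | Conn ω (g i) x}) a
  simp only [setOf_conn_eq_iff] at hclusters
  simpa only [Set.indicator_apply, Set.mem_ofPred_eq] using hclusters

section PathBound

variable {S : Finset Γ} {P : Measure (Config Γ)}

theorem card_sub_expDeg_eq_sum [IsProbabilityMeasure P] :
    (S.card : ℝ) - expDeg S P = ∑ t ∈ S, P.real {ω | ω s(1, t) = false} := by
  rw [expDeg, Finset.card_eq_sum_ones, Nat.cast_sum, ← Finset.sum_sub_distrib]
  refine Finset.sum_congr rfl fun t _ => ?_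
  have hcompl : {ω : Config Γ | ω s(1, t) = false} = {ω | ω s(1, t) = true}ᶜ := by
    ext ω; simp
  rw [hcompl, probReal_compl_eq_one_sub (measurableSet_edge_eq _ _), Nat.cast_one]
  rfl

theorem expDeg_le_card [IsProbabilityMeasure P] : expDeg S P ≤ S.card := by
  rw [← sub_nonneg, card_sub_expDeg_eq_sum]
  exact Finset.sum_nonneg fun _ _ => measureReal_nonneg

theorem measureReal_edge_closed_le [IsProbabilityMeasure P] {t : Γ} (ht : t ∈ S) :
    P.real {ω | ω s(1, t) = false} ≤ S.card - expDeg S P := by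
  rw [card_sub_expDeg_eq_sum]
  exact Finset.single_le_sum (f := fun t => P.real {ω | ω s(1, t) = false})
    (fun _ _ => measureReal_nonneg) ht

theorem measureReal_not_conn_le [IsFiniteMeasure P] (hinv : ∀ γ : Γ, P.map (shift γ) = P)
    (l : List Γ) (a : Γ) :
    P.real {ω | ¬Conn ω a (a * l.prod)} ≤
      (l.map fun t => P.real {ω | ω s(1, t) = false}).sum := by
  induction l generalizing a with
  | nil => simp [conn_refl]
  | cons t l ih =>
    have hsplit : {ω | ¬Conn ω a (a * (t :: l).prod)} ⊆
        {ω | ω s(a, a * t) = false} ∪ {ω | ¬Conn ω (a * t) (a * t * l.prod)} := by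
      intro ω hω
      by_contra hcon
      simp only [Set.mem_union, Set.mem_ofPred_eq, not_or, not_not, Bool.not_eq_false] at hcon
      exact hω (by simpa [mul_assoc] using (conn_of_open hcon.1).trans hcon.2)
    calc P.real {ω | ¬Conn ω a (a * (t :: l).prod)}
        ≤ P.real {ω | ω s(a, a * t) = false} + P.real {ω | ¬Conn ω (a * t) (a * t * l.prod)} :=
          (measureReal_mono hsplit).trans (measureReal_union_le _ _)
      _ ≤ _ := by
          rw [measureReal_edge_eq_mul_left hinv, List.map_cons, List.sum_cons]
          exact add_le_add le_rfl (ih (a * t))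

theorem one_sub_length_mul_le_tpf [Countable Γ] (hP : IsInvBondPerc S P) {l : List Γ}
    (hl : ∀ x ∈ l, x ∈ S) : 1 - l.length * (S.card - expDeg S P) ≤ tpf P 1 l.prod := by
  have := hP.prob
  have hclosed := measureReal_not_conn_le hP.invariant l 1
  have hsum : (l.map fun t => P.real {ω | ω s(1, t) = false}).sum ≤
      l.length * (S.card - expDeg S P) := by
    calc _ ≤ (l.map fun t => P.real {ω | ω s(1, t) = false}).length • (S.card - expDeg S P) :=
          List.sum_le_card_nsmul _ _ fun x hx => by
            obtain ⟨t, ht, rfl⟩ := List.mem_map.1 hx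
            exact measureReal_edge_closed_le (hl t ht)
      _ = _ := by rw [List.length_map, nsmul_eq_mul]
  have htpf : tpf P 1 l.prod = 1 - P.real {ω | ¬Conn ω 1 l.prod} := by
    rw [← Set.compl_ofPred, probReal_compl_eq_one_sub (measurableSet_conn _ _), sub_sub_cancel]
    rfl
  rw [one_mul] at hclosed
  linarith

end PathBound

theorem exists_word_length_eq_wlen {S : Finset Γ} (hS : IsSymmGen S) (g : Γ) :
    ∃ l : List Γ, (∀ x ∈ l, x ∈ S) ∧ l.prod = g ∧ l.length = wlen S g := by
  obtain ⟨l, hlS, hlg⟩ := hS.2.2 g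
  have hne : {n | ∃ l : List Γ, (∀ x ∈ l, x ∈ S) ∧ l.prod = g ∧ l.length = n}.Nonempty :=
    ⟨l.length, l, hlS, hlg, rfl⟩
  exact Nat.sInf_mem hne

theorem one_sub_wlen_mul_le_tpf [Countable Γ] {S : Finset Γ} (hS : IsSymmGen S)
    {P : Measure (Config Γ)} (hP : IsInvBondPerc S P) (g : Γ) :
    1 - wlen S g * (S.card - expDeg S P) ≤ tpf P 1 g := by
  obtain ⟨l, hlS, rfl, hlen⟩ := exists_word_length_eq_wlen hS g
  exact hlen ▸ one_sub_length_mul_le_tpf hP hlS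

end Percolation

theorem kazhdan_quantitative_threshold_general {Γ : Type*} [Group Γ] [Countable Γ]
    (S : Finset Γ) (hS : IsSymmGen S)
    (ε : ℝ) (δ : ℝ) (hδ0 : 0 < δ) (hδ1 : δ < 1 / Real.sqrt 2)
    (K : Finset Γ)
    (hpair : ∀ φ : Γ → ℝ,
      (∀ g : Γ, 0 ≤ φ g ∧ φ g ≤ 1) → φ 1 = 1 → IsPosDef (fun g => (φ g : ℂ)) →
      (∀ g ∈ K, 1 - δ ^ 2 * ε ^ 2 / 2 ≤ φ g) →
      (∀ g : Γ, 1 - 2 * δ ^ 2 ≤ φ g))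
    (dK : ℕ) (hdK : dK = K.sup (wlen S))
    (P : Measure (Config Γ)) (hP : IsInvBondPerc S P)
    (hdeg : expDeg S P > (S.card : ℝ) - δ ^ 2 * ε ^ 2 / (2 * (dK : ℝ))) :
    (∀ g h : Γ, 1 - 2 * δ ^ 2 ≤ tpf P g h) ∧ 0 < 1 - 2 * δ ^ 2 := by
  have := hP.prob
  set η : ℝ := S.card - expDeg S P
  have hη : 0 ≤ η := sub_nonneg.2 expDeg_le_card
  have hdKη : dK * η ≤ δ ^ 2 * ε ^ 2 / 2 := by
    rcases Nat.eq_zero_or_pos dK with hzero | hpos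
    · rw [hzero, Nat.cast_zero, zero_mul]
      positivity
    · have hlt : η < δ ^ 2 * ε ^ 2 / (2 * dK) := by linarith
      rw [lt_div_iff₀ (by positivity)] at hlt
      linarith
  have hK : ∀ g ∈ K, 1 - δ ^ 2 * ε ^ 2 / 2 ≤ tpf P 1 g := fun g hg => by
    have hlen : (wlen S g : ℝ) ≤ dK := by exact_mod_cast hdK ▸ Finset.le_sup hg
    linarith [one_sub_wlen_mul_le_tpf hS hP g, mul_le_mul_of_nonneg_right hlen hη]
  have hτ := hpair (tpf P 1) (fun g => ⟨measureReal_nonneg, measureReal_le_one⟩) (tpf_self P 1)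
    (isPosDef_tpf hP.invariant) hK
  have hδsq : δ ^ 2 < 1 / 2 := calc
    δ ^ 2 < (1 / Real.sqrt 2) ^ 2 := pow_lt_pow_left₀ hδ1 hδ0.le two_ne_zero
    _ = 1 / 2 := by rw [div_pow, Real.sq_sqrt zero_le_two, one_pow]
  refine ⟨fun g h => ?_, by linarith⟩
  have hgh := tpf_mul_left hP.invariant g 1 (g⁻¹ * h)
  rw [mul_one, mul_inv_cancel_left] at hgh
  exact hgh ▸ hτ (g⁻¹ * h)

/-- quantitative threshold for Kazhdan groups. Given `ε > 0`,
`δ ∈ (0, 1/√2)` and a finite set `K` (containing a non-identity element) such that every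
normalized positive definite `φ : Γ → [0,1]` with `min_{g ∈ K} φ(g) ≥ 1 - δ²ε²/2` satisfies
`inf_g φ(g) ≥ 1 - 2δ²`, every `Γ`-invariant bond percolation with
`E[deg_ω(o)] > deg(o) - δ²ε²/(2·d_K)` has `inf_{g,h} τ(g,h) ≥ 1 - 2δ² > 0`. -/
theorem kazhdan_quantitative_threshold {Γ : Type*} [Group Γ] [Countable Γ] [Infinite Γ]
    (S : Finset Γ) (hS : IsSymmGen S)
    (ε : ℝ) (hε : 0 < ε) (δ : ℝ) (hδ0 : 0 < δ) (hδ1 : δ < 1 / Real.sqrt 2)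
    (K : Finset Γ) (hK : ∃ g ∈ K, g ≠ 1)
    (hpair : ∀ φ : Γ → ℝ,
      (∀ g : Γ, 0 ≤ φ g ∧ φ g ≤ 1) → φ 1 = 1 → IsPosDef (fun g => (φ g : ℂ)) →
      (∀ g ∈ K, 1 - δ ^ 2 * ε ^ 2 / 2 ≤ φ g) →
      (∀ g : Γ, 1 - 2 * δ ^ 2 ≤ φ g))
    (dK : ℕ) (hdK : dK = K.sup (wlen S))
    (P : Measure (Config Γ)) (hP : IsInvBondPerc S P)
    (hdeg : expDeg S P > (S.card : ℝ) - δ ^ 2 * ε ^ 2 / (2 * (dK : ℝ))) :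
    (∀ g h : Γ, 1 - 2 * δ ^ 2 ≤ tpf P g h) ∧ 0 < 1 - 2 * δ ^ 2 :=
  kazhdan_quantitative_threshold_general S hS ε δ hδ0 hδ1 K hpair dK hdK P hP hdeg

end InvPerc
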